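/- Let C be a prefix code. A word w ∈ C* is synchronizing for C if and only if w is a constant for the language C*. -/

import Mathlib

variable {A : Type*}

/-- `C*`: `w` is a concatenation of words of `C`. -/
def InStar (C : Set (List A)) (w : List A) : Prop :=
  ∃ l : List (List A), (∀ u ∈ l, u ∈ C) ∧ l.flatten = w

def IsPrefixCode (C : Set (List A)) : Prop :=
  ∀ c ∈ C, ∀ c' ∈ C, c <+: c' → c = c'

namespace InStar

variable {C : Set (List A)}

theorem nil : InStar C [] :=
  ⟨[], by simp, rfl⟩

theorem append {u v : List A} (hu : InStar C u) (hv : InStar C v) : InStar C (u ++ v) := by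
  obtain ⟨lu, hlu, rfl⟩ := hu
  obtain ⟨lv, hlv, rfl⟩ := hv
  exact ⟨lu ++ lv, fun x hx => (List.mem_append.mp hx).elim (hlu x) (hlv x), List.flatten_append⟩

end InStar

namespace IsPrefixCode

variable {C : Set (List A)}

theorem eq_of_append_eq_append (hpc : IsPrefixCode C) {c c' x y : List A} (hc : c ∈ C)
    (hc' : c' ∈ C) (h : c ++ x = c' ++ y) : c = c' := by
  have hpre : c <+: c' ++ y := h ▸ List.prefix_append c x
  rcases List.prefix_or_prefix_of_prefix hpre (List.prefix_append c' y) with hle | hge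
  · exact hpc c hc c' hc' hle
  · exact (hpc c' hc' c hc hge).symm

/-- A prefix code is decoded deterministically from the left, so any factorization of `u ++ v`
into code words starts with one of `u`. -/
theorem inStar_of_append (hpc : IsPrefixCode C) {u v : List A} (hu : InStar C u)
    (huv : InStar C (u ++ v)) : InStar C v := by
  obtain ⟨l, hl, rfl⟩ := hu
  induction l with
  | nil => simpa using huv
  | cons c l ih =>
    obtain ⟨m, hm, hmv⟩ := huv
    cases m with
    | nil =>
      have hv : v = [] := (List.append_eq_nil_iff.mp hmv.symm).2
      exact hv ▸ InStar.nil
    | cons c' m =>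
      have hc := hl c List.mem_cons_self
      have hmv' : c' ++ m.flatten = c ++ (l.flatten ++ v) := by simpa using hmv
      obtain rfl := (hpc.eq_of_append_eq_append hc (hm c' List.mem_cons_self) hmv'.symm).symm
      exact ih (fun x hx => hl x (List.mem_cons_of_mem _ hx))
        ⟨m, fun x hx => hm x (List.mem_cons_of_mem _ hx), List.append_cancel_left hmv'⟩

end IsPrefixCode

theorem stmt11_general (C : Set (List A)) (hpc : IsPrefixCode C)
    (w : List A) (hw : InStar C w) :
    (∀ u v : List A, InStar C (u ++ w ++ v) →
        InStar C (u ++ w) ∧ InStar C v) ↔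
    (∀ u v u' v' : List A, InStar C (u ++ w ++ v) → InStar C (u' ++ w ++ v') →
        InStar C (u ++ w ++ v') ∧ InStar C (u' ++ w ++ v)) := by
  constructor
  · intro hsync u v u' v' h h'
    obtain ⟨huw, hv⟩ := hsync u v h
    obtain ⟨hu'w, hv'⟩ := hsync u' v' h'
    exact ⟨huw.append hv', hu'w.append hv⟩
  · intro hconst u v h
    have hw' : InStar C ([] ++ w ++ []) := by simpa using hw
    obtain ⟨huw, hwv⟩ := hconst u v [] [] h hw'
    simp only [List.append_nil, List.nil_append] at huw hwv
    exact ⟨huw, hpc.inStar_of_append hw hwv⟩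

/-- for a prefix code `C` and `w ∈ C*`, `w` is synchronizing for
`C` iff `w` is a constant for the language `C*`. -/
theorem stmt11 [Fintype A] (C : Set (List A)) (hpc : IsPrefixCode C)
    (hne : ∀ c ∈ C, c ≠ []) (w : List A) (hw : InStar C w) :
    (∀ u v : List A, InStar C (u ++ w ++ v) →
        InStar C (u ++ w) ∧ InStar C v) ↔
    (∀ u v u' v' : List A, InStar C (u ++ w ++ v) → InStar C (u' ++ w ++ v') →
        InStar C (u ++ w ++ v') ∧ InStar C (u' ++ w ++ v)) :=
  stmt11_general C hpc w hw
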